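/- Let G be a group, M a commutative monoid, φ a filter on G, and s, t, u ∈ M all nonzero. Then for all x ∈ φ_s, y ∈ φ_t, z ∈ φ_u, the product [[x,y],z] · [[y,z],x] · [[z,x],y] lies in φ_{s+t+u}⁺. (This is the graded Jacobi identity underlying the fact that the associated graded object L(φ) of a filter is an M-graded Lie ring.) -/

import Mathlib

/-!
Pass to the quotient by the normal subgroup `φ_{s+t+u}⁺`, where the image filter has trivial
`⁺`-part at `s+t+u`. There every element of `φ_{s+t+u}` commutes with every element of
`φ_v`, `v ≠ 0`, and `φ_{s+2t+u}` is trivial. Since `[x,y⁻¹] = [x,y]⁻¹ · [[x,y]⁻¹,y⁻¹]` with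
the last factor in `φ_{s+2t}`, this gives `[[x,y⁻¹],z] = [[x,y],z]⁻¹`. The Hall–Witt identity
`[[x,y⁻¹],z]^y · [[y,z⁻¹],x]^z · [[z,x⁻¹],y]^x = 1` then collapses to
`[[x,y],z]⁻¹ · [[y,z],x]⁻¹ · [[z,x],y]⁻¹ = 1`, whose three factors commute pairwise.
-/

/-- `φ_s⁺`, the subgroup generated by all `φ (s + t)` with `t ≠ 0`. -/
def filterPlus {M : Type*} [AddCommMonoid M] {G : Type*} [Group G]
    (φ : M → Subgroup G) (s : M) : Subgroup G :=
  ⨆ t ∈ {t : M | t ≠ 0}, φ (s + t)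

/-- A filter on `G` over the commutative monoid `M`. -/
def IsFilter {M : Type*} [AddCommMonoid M] {G : Type*} [Group G]
    (φ : M → Subgroup G) : Prop :=
  φ 0 = ⊤ ∧ ∀ s t : M, ⁅φ s, φ t⁆ ≤ φ (s + t) ∧ φ (s + t) ≤ φ s ⊓ φ t

/-- The commutator `[x,y] = x⁻¹y⁻¹xy` (the convention used in the paper). -/
def pcomm {G : Type*} [Group G] (x y : G) : G := x⁻¹ * y⁻¹ * x * y

section Commutator

variable {G H : Type*} [Group G] [Group H]

open scoped commutatorElement in
theorem pcomm_eq_commutatorElement (x y : G) : pcomm x y = ⁅x⁻¹, y⁻¹⁆ := by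
  simp only [pcomm, commutatorElement_def, inv_inv]

theorem map_pcomm (f : G →* H) (x y : G) : f (pcomm x y) = pcomm (f x) (f y) := by
  simp only [pcomm, map_mul, map_inv]

theorem pcomm_eq_one_iff {x y : G} : pcomm x y = 1 ↔ Commute x y := by
  rw [pcomm, mul_assoc _ x y, ← mul_inv_rev, inv_mul_eq_one, commute_iff_eq, eq_comm]

theorem pcomm_inv_left (x y : G) : pcomm x⁻¹ y = x * (pcomm x y)⁻¹ * x⁻¹ := by
  simp only [pcomm]; group

theorem pcomm_mul_left (a b z : G) : pcomm (a * b) z = b⁻¹ * pcomm a z * b * pcomm b z := by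
  simp only [pcomm]; group

theorem pcomm_inv_right (x y : G) :
    pcomm x y⁻¹ = (pcomm x y)⁻¹ * pcomm (pcomm x y)⁻¹ y⁻¹ := by
  simp only [pcomm]; group

theorem hall_witt (x y z : G) :
    y⁻¹ * pcomm (pcomm x y⁻¹) z * y * (z⁻¹ * pcomm (pcomm y z⁻¹) x * z) *
      (x⁻¹ * pcomm (pcomm z x⁻¹) y * x) = 1 := by
  simp only [pcomm]; group

theorem mul_mul_eq_one_of_inv_mul_inv_mul_inv {a b c : G} (hab : Commute a b)
    (hac : Commute a c) (hbc : Commute b c) (h : a⁻¹ * b⁻¹ * c⁻¹ = 1) : a * b * c = 1 := by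
  have hcba : c * b * a = 1 := by
    rw [← inv_inj, inv_one, ← h]
    simp only [mul_inv_rev, mul_assoc]
  rw [hab.eq, mul_assoc, hac.eq, ← mul_assoc, hbc.eq, hcba]

end Commutator

section FilterPlus

variable {G Q : Type*} [Group G] [Group Q] {M : Type*} [AddCommMonoid M]
  (φ : M → Subgroup G)

theorem le_filterPlus (s : M) {v : M} (hv : v ≠ 0) :
    φ (s + v) ≤ filterPlus φ s :=
  le_iSup₂ (f := fun v (_ : v ∈ {t : M | t ≠ 0}) ↦ φ (s + v)) v hv

theorem filterPlus_map (f : G →* Q) (s : M) :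
    filterPlus (fun v ↦ (φ v).map f) s = (filterPlus φ s).map f := by
  simp only [filterPlus, Subgroup.map_iSup]

variable {φ}

theorem eq_bot_of_filterPlus_eq_bot {s : M} (h : filterPlus φ s = ⊥) {v : M} (hv : v ≠ 0) :
    φ (s + v) = ⊥ :=
  le_bot_iff.mp (h ▸ le_filterPlus φ s hv)

theorem eq_one_of_mem_of_filterPlus_eq_bot {w v : M} (h : filterPlus φ w = ⊥) (hv : v ≠ 0)
    {g : G} (hg : g ∈ φ (w + v)) : g = 1 := by
  rwa [eq_bot_of_filterPlus_eq_bot h hv, Subgroup.mem_bot] at hg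

end FilterPlus

namespace IsFilter

variable {G Q : Type*} [Group G] [Group Q] {M : Type*} [AddCommMonoid M]
  {φ : M → Subgroup G}

theorem pcomm_mem (hφ : IsFilter φ) {a b : M} {g k : G} (hg : g ∈ φ a) (hk : k ∈ φ b) :
    pcomm g k ∈ φ (a + b) := by
  rw [pcomm_eq_commutatorElement]
  exact (hφ.2 a b).1 (Subgroup.commutator_mem_commutator (inv_mem hg) (inv_mem hk))

theorem mem_of_mem_add_left (hφ : IsFilter φ) {a b : M} {g : G} (hg : g ∈ φ (a + b)) :
    g ∈ φ a :=
  ((hφ.2 a b).2 hg).1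

theorem mem_of_mem_add_right (hφ : IsFilter φ) {a b : M} {g : G} (hg : g ∈ φ (a + b)) :
    g ∈ φ b :=
  ((hφ.2 a b).2 hg).2

theorem normal (hφ : IsFilter φ) (v : M) : (φ v).Normal := by
  rw [← Subgroup.commutator_top_right_le_iff, ← hφ.1]
  simpa only [add_zero] using (hφ.2 v 0).1

theorem filterPlus_normal (hφ : IsFilter φ) (s : M) : (filterPlus φ s).Normal := by
  have := hφ.normal
  unfold filterPlus
  infer_instance

theorem map {f : G →* Q} (hφ : IsFilter φ) (hf : Function.Surjective f) :
    IsFilter fun v ↦ (φ v).map f := by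
  refine ⟨by simp only [hφ.1, Subgroup.map_top_of_surjective f hf], fun s t ↦ ⟨?_, ?_⟩⟩
  · rw [← Subgroup.map_commutator]
    exact Subgroup.map_mono (hφ.2 s t).1
  · exact (Subgroup.map_mono (hφ.2 s t).2).trans (Subgroup.map_inf_le _ _ f)

theorem commute_of_filterPlus_eq_bot (hφ : IsFilter φ) {w v : M} (h : filterPlus φ w = ⊥)
    (hv : v ≠ 0) {g k : G} (hg : g ∈ φ w) (hk : k ∈ φ v) : Commute g k :=
  pcomm_eq_one_iff.mp (eq_one_of_mem_of_filterPlus_eq_bot h hv (hφ.pcomm_mem hg hk))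

theorem pcomm_pcomm_inv_right_of_filterPlus_eq_bot (hφ : IsFilter φ) {s t u : M}
    (h : filterPlus φ (s + t + u) = ⊥) (hs : s ≠ 0) (ht : t ≠ 0) {x y z : G}
    (hx : x ∈ φ s) (hy : y ∈ φ t) (hz : z ∈ φ u) :
    pcomm (pcomm x y⁻¹) z = (pcomm (pcomm x y) z)⁻¹ := by
  set c := pcomm x y
  have hc : c ∈ φ (s + t) := hφ.pcomm_mem hx hy
  set d := pcomm c⁻¹ y⁻¹
  have hd : d ∈ φ (s + t + t) := hφ.pcomm_mem (inv_mem hc) (inv_mem hy)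
  have hdz : pcomm d z = 1 := by
    refine eq_one_of_mem_of_filterPlus_eq_bot h ht ?_
    rw [add_right_comm]
    exact hφ.pcomm_mem hd hz
  have hcz : Commute (pcomm c z) c :=
    hφ.commute_of_filterPlus_eq_bot h hs (hφ.pcomm_mem hc hz) (hφ.mem_of_mem_add_left hc)
  have hdc : Commute (pcomm c⁻¹ z) d :=
    hφ.commute_of_filterPlus_eq_bot h ht (hφ.pcomm_mem (inv_mem hc) hz)
      (hφ.mem_of_mem_add_right hd)
  calc pcomm (pcomm x y⁻¹) z = pcomm (c⁻¹ * d) z := by rw [pcomm_inv_right]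
    _ = pcomm c⁻¹ z := by rw [pcomm_mul_left, hdz, mul_one, hdc.symm.inv_mul_cancel]
    _ = (pcomm c z)⁻¹ := by rw [pcomm_inv_left, hcz.symm.inv_right.mul_inv_cancel]

theorem jacobi_of_filterPlus_eq_bot (hφ : IsFilter φ) {s t u : M}
    (h : filterPlus φ (s + t + u) = ⊥) (hs : s ≠ 0) (ht : t ≠ 0) (hu : u ≠ 0) {x y z : G}
    (hx : x ∈ φ s) (hy : y ∈ φ t) (hz : z ∈ φ u) :
    pcomm (pcomm x y) z * pcomm (pcomm y z) x * pcomm (pcomm z x) y = 1 := by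
  have h' : filterPlus φ (t + u + s) = ⊥ := add_rotate s t u ▸ h
  have h'' : filterPlus φ (u + s + t) = ⊥ := add_rotate t u s ▸ h'
  have h₁ : pcomm (pcomm x y) z ∈ φ (s + t + u) := hφ.pcomm_mem (hφ.pcomm_mem hx hy) hz
  have h₂ : pcomm (pcomm y z) x ∈ φ (t + u + s) := hφ.pcomm_mem (hφ.pcomm_mem hy hz) hx
  have h₃ : pcomm (pcomm z x) y ∈ φ (u + s + t) := hφ.pcomm_mem (hφ.pcomm_mem hz hx) hy
  have hw := hall_witt x y z
  rw [hφ.pcomm_pcomm_inv_right_of_filterPlus_eq_bot h hs ht hx hy hz,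
    hφ.pcomm_pcomm_inv_right_of_filterPlus_eq_bot h' ht hu hy hz hx,
    hφ.pcomm_pcomm_inv_right_of_filterPlus_eq_bot h'' hu hs hz hx hy,
    (hφ.commute_of_filterPlus_eq_bot h ht h₁ hy).symm.inv_right.inv_mul_cancel,
    (hφ.commute_of_filterPlus_eq_bot h' hu h₂ hz).symm.inv_right.inv_mul_cancel,
    (hφ.commute_of_filterPlus_eq_bot h'' hs h₃ hx).symm.inv_right.inv_mul_cancel] at hw
  exact mul_mul_eq_one_of_inv_mul_inv_mul_inv
    (hφ.commute_of_filterPlus_eq_bot h hs h₁ (hφ.mem_of_mem_add_right h₂))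
    (hφ.commute_of_filterPlus_eq_bot h ht h₁ (hφ.mem_of_mem_add_right h₃))
    (hφ.commute_of_filterPlus_eq_bot h' ht h₂ (hφ.mem_of_mem_add_right h₃)) hw

end IsFilter

/-- The graded Jacobi identity: `[[x,y],z]·[[y,z],x]·[[z,x],y] ∈ φ_{s+t+u}⁺`. -/
theorem statement3 {G : Type*} [Group G] {M : Type*} [AddCommMonoid M]
    (φ : M → Subgroup G) (hφ : IsFilter φ) (s t u : M)
    (hs : s ≠ 0) (ht : t ≠ 0) (hu : u ≠ 0)
    (x y z : G) (hx : x ∈ φ s) (hy : y ∈ φ t) (hz : z ∈ φ u) :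
    pcomm (pcomm x y) z * pcomm (pcomm y z) x * pcomm (pcomm z x) y ∈
      filterPlus φ (s + t + u) := by
  set N := filterPlus φ (s + t + u)
  have := hφ.filterPlus_normal (s + t + u)
  let π := QuotientGroup.mk' N
  have hψ : IsFilter fun v ↦ (φ v).map π := hφ.map (QuotientGroup.mk'_surjective N)
  have hψN : filterPlus (fun v ↦ (φ v).map π) (s + t + u) = ⊥ := by
    rw [filterPlus_map, Subgroup.map_eq_bot_iff, QuotientGroup.ker_mk']
  have hjacobi := hψ.jacobi_of_filterPlus_eq_bot hψN hs ht hu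
    (Subgroup.mem_map_of_mem π hx) (Subgroup.mem_map_of_mem π hy) (Subgroup.mem_map_of_mem π hz)
  simp only [← map_pcomm, ← map_mul] at hjacobi
  rwa [← MonoidHom.mem_ker, QuotientGroup.ker_mk'] at hjacobi
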